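/- arXiv:math/0410210 — 3 statements merged into one kernel-verified Lean document; each statement's English description precedes it below -/
import Mathlib

section
/- Let (a_j)_{j≥1} be real numbers in the open interval (0,1) with a_j → 1, and define automorphisms f_j of ℂ² by f_j(z, w) = (z² + a_j w, a_j z). Then the basin of attraction Ω* = {p ∈ ℂ² : f_n ∘ ⋯ ∘ f_1(p) → 0 as n → ∞} is not an open subset of ℂ² (in particular, it is not biholomorphic to ℂ²). -/
open Filter Metric Set
open scoped ENNReal

noncomputable section

/-- `ℂ²` with the Euclidean norm. -/
abbrev E2 := EuclideanSpace ℂ (Fin 2)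

/-- The map `f(z, w) = (z² + a w, a z)` on `ℂ²`. -/
def henon (a : ℂ) (p : E2) : E2 :=
  (WithLp.equiv 2 (Fin 2 → ℂ)).symm ![(p 0) ^ 2 + a * p 1, a * p 0]

/-- `seqComp f n = f n ∘ ⋯ ∘ f 1` (and `seqComp f 0 = id`). -/
def seqComp (f : ℕ → E2 → E2) : ℕ → E2 → E2
  | 0 => id
  | n + 1 => f (n + 1) ∘ seqComp f n

/-!
Restrict the dynamics to the closed real quadrant `x, y ≥ 0`, which every `f_j` preserves, and
follow the first coordinate `x_n` of an orbit. Since `x_{n+1} ≥ x_n²`, once `x_n > 1` the orbit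
escapes. Otherwise `x_n ≤ 1` for all `n`, and then `x_n → 0`: from
`x_{n+2} ≥ x_n⁴ + a_{n+1} a_{n+2} x_n` and `a_{n+1} a_{n+2} → 1`, a value `x_n ≥ ε` would be
multiplied by at least `1 + ε³/2` every two steps from some time on, contradicting boundedness.
So on the diagonal ray `{(t, t) : t ≥ 0}` the basin is the complement of the escape set, which is
open and contains `(2, 2)`; an open basin, which contains `0`, would disconnect the ray.
-/

open Topology

section RealDynamics

def realHenon (c : ℝ) (q : ℝ × ℝ) : ℝ × ℝ :=
  (q.1 ^ 2 + c * q.2, c * q.1)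

def realOrbit (a : ℕ → ℝ) (q : ℝ × ℝ) : ℕ → ℝ × ℝ
  | 0 => q
  | n + 1 => realHenon (a (n + 1)) (realOrbit a q n)

theorem continuous_realHenon (c : ℝ) : Continuous (realHenon c) := by
  unfold realHenon
  fun_prop

theorem continuous_realOrbit (a : ℕ → ℝ) (n : ℕ) : Continuous fun q => realOrbit a q n := by
  induction n with
  | zero => exact continuous_id
  | succ n ih => exact (continuous_realHenon _).comp ih

theorem realOrbit_origin (a : ℕ → ℝ) (n : ℕ) : realOrbit a 0 n = 0 := by
  induction n with
  | zero => rfl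
  | succ n ih => simp [realOrbit, ih, realHenon]

theorem realHenon_nonneg {c : ℝ} (hc : 0 ≤ c) {q : ℝ × ℝ} (hq : 0 ≤ q) : 0 ≤ realHenon c q :=
  ⟨add_nonneg (sq_nonneg _) (mul_nonneg hc hq.2), mul_nonneg hc hq.1⟩

theorem sq_fst_le_fst_realHenon {c : ℝ} (hc : 0 ≤ c) {q : ℝ × ℝ} (hq : 0 ≤ q.2) :
    q.1 ^ 2 ≤ (realHenon c q).1 :=
  le_add_of_nonneg_right (mul_nonneg hc hq)

variable {a : ℕ → ℝ}

theorem realOrbit_nonneg (ha : ∀ j, 0 ≤ a (j + 1)) {q : ℝ × ℝ} (hq : 0 ≤ q) (n : ℕ) :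
    0 ≤ realOrbit a q n := by
  induction n with
  | zero => exact hq
  | succ n ih => exact realHenon_nonneg (ha n) ih

theorem one_lt_fst_realOrbit_of_le (ha : ∀ j, 0 ≤ a (j + 1)) {q : ℝ × ℝ} (hq : 0 ≤ q)
    {n : ℕ} (hn : 1 < (realOrbit a q n).1) {m : ℕ} (hnm : n ≤ m) :
    1 < (realOrbit a q m).1 := by
  induction m, hnm using Nat.le_induction with
  | base => exact hn
  | succ m _ ih =>
    calc 1 < (realOrbit a q m).1 ^ 2 := one_lt_pow₀ ih two_ne_zero
      _ ≤ (realOrbit a q (m + 1)).1 :=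
        sq_fst_le_fst_realHenon (ha m) (realOrbit_nonneg ha hq m).2

theorem fst_realOrbit_add_two_ge (ha : ∀ j, 0 ≤ a (j + 1)) {q : ℝ × ℝ} (hq : 0 ≤ q) (n : ℕ) :
    (realOrbit a q n).1 ^ 4 + a (n + 1) * a (n + 2) * (realOrbit a q n).1 ≤
      (realOrbit a q (n + 2)).1 := by
  have hsq : (realOrbit a q n).1 ^ 2 ≤ (realOrbit a q (n + 1)).1 :=
    sq_fst_le_fst_realHenon (ha n) (realOrbit_nonneg ha hq n).2
  calc (realOrbit a q n).1 ^ 4 + a (n + 1) * a (n + 2) * (realOrbit a q n).1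
      = ((realOrbit a q n).1 ^ 2) ^ 2 + a (n + 2) * (a (n + 1) * (realOrbit a q n).1) := by ring
    _ ≤ (realOrbit a q (n + 1)).1 ^ 2 + a (n + 2) * (a (n + 1) * (realOrbit a q n).1) := by
      gcongr
    _ = (realOrbit a q (n + 2)).1 := rfl

theorem pow_mul_le_fst_realOrbit_add (ha : ∀ j, 0 ≤ a (j + 1)) {q : ℝ × ℝ} (hq : 0 ≤ q)
    {ε : ℝ} (hε : 0 < ε) {n : ℕ} (hn : ε ≤ (realOrbit a q n).1)
    (hprod : ∀ m ≥ n, 1 - ε ^ 3 / 2 ≤ a (m + 1) * a (m + 2)) (k : ℕ) :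
    (1 + ε ^ 3 / 2) ^ k * ε ≤ (realOrbit a q (n + 2 * k)).1 := by
  induction k with
  | zero => simpa using hn
  | succ k ih =>
    set x := (realOrbit a q (n + 2 * k)).1
    have hεx : ε ≤ x := le_trans (le_mul_of_one_le_left hε.le (one_le_pow₀ (le_add_of_nonneg_right (by positivity)))) ih
    have hx4 : ε ^ 3 * x ≤ x ^ 4 := by
      have := pow_le_pow_left₀ hε.le hεx 3
      nlinarith
    have hax := mul_le_mul_of_nonneg_right (hprod (n + 2 * k) (by omega)) (hε.le.trans hεx)
    calc (1 + ε ^ 3 / 2) ^ (k + 1) * ε = (1 + ε ^ 3 / 2) * ((1 + ε ^ 3 / 2) ^ k * ε) := by ring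
      _ ≤ (1 + ε ^ 3 / 2) * x := by gcongr
      _ ≤ x ^ 4 + a (n + 2 * k + 1) * a (n + 2 * k + 2) * x := by nlinarith
      _ ≤ (realOrbit a q (n + 2 * (k + 1))).1 := fst_realOrbit_add_two_ge ha hq _

theorem tendsto_fst_realOrbit_of_bounded (ha : ∀ j, 0 ≤ a (j + 1))
    (hlim : Tendsto a atTop (𝓝 1)) {q : ℝ × ℝ} (hq : 0 ≤ q) {B : ℝ}
    (hB : ∀ n, (realOrbit a q n).1 ≤ B) :
    Tendsto (fun n => (realOrbit a q n).1) atTop (𝓝 0) := by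
  refine tendsto_order.2 ⟨fun b hb => Eventually.of_forall fun n =>
    hb.trans_le (realOrbit_nonneg ha hq n).1, fun ε hε => ?_⟩
  have hprod : Tendsto (fun m => a (m + 1) * a (m + 2)) atTop (𝓝 1) := by
    simpa using (hlim.comp (tendsto_add_atTop_nat 1)).mul (hlim.comp (tendsto_add_atTop_nat 2))
  obtain ⟨N, hN⟩ := eventually_atTop.1
    (hprod.eventually (eventually_ge_nhds (by linarith [pow_pos hε 3] : 1 - ε ^ 3 / 2 < 1)))
  refine eventually_atTop.2 ⟨N, fun n hn => not_le.1 fun hεn => ?_⟩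
  obtain ⟨k, hk⟩ := pow_unbounded_of_one_lt (B / ε) (by linarith [pow_pos hε 3] :
    1 < 1 + ε ^ 3 / 2)
  have hgrow := pow_mul_le_fst_realOrbit_add ha hq hε hεn (fun m hm => hN m (hn.trans hm)) k
  have := hB (n + 2 * k)
  rw [div_lt_iff₀ hε] at hk
  linarith

theorem tendsto_realOrbit_of_bounded (ha : ∀ j, 0 ≤ a (j + 1))
    (hlim : Tendsto a atTop (𝓝 1)) {q : ℝ × ℝ} (hq : 0 ≤ q) {B : ℝ}
    (hB : ∀ n, (realOrbit a q n).1 ≤ B) :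
    Tendsto (realOrbit a q) atTop (𝓝 0) := by
  have hx := tendsto_fst_realOrbit_of_bounded ha hlim hq hB
  have hy : Tendsto (fun n => (realOrbit a q (n + 1)).2) atTop (𝓝 0) := by
    simpa [realOrbit, realHenon] using (hlim.comp (tendsto_add_atTop_nat 1)).mul hx
  exact hx.prodMk_nhds ((tendsto_add_atTop_iff_nat 1).1 hy)

end RealDynamics

def ofRealPair (q : ℝ × ℝ) : E2 :=
  WithLp.toLp 2 ![(q.1 : ℂ), (q.2 : ℂ)]

theorem continuous_ofRealPair : Continuous ofRealPair := by
  unfold ofRealPair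
  fun_prop

theorem ofRealPair_zero : ofRealPair 0 = 0 := by
  ext i
  fin_cases i <;> simp [ofRealPair]

theorem re_ofRealPair_apply_zero (q : ℝ × ℝ) : (ofRealPair q 0).re = q.1 := by
  simp [ofRealPair]

theorem henon_ofRealPair (c : ℝ) (q : ℝ × ℝ) :
    henon (c : ℂ) (ofRealPair q) = ofRealPair (realHenon c q) := by
  ext i
  fin_cases i <;> simp [henon, ofRealPair, realHenon]

theorem seqComp_henon_ofRealPair (a : ℕ → ℝ) (q : ℝ × ℝ) (n : ℕ) :
    seqComp (fun j => henon (a j : ℂ)) n (ofRealPair q) = ofRealPair (realOrbit a q n) := by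
  induction n with
  | zero => rfl
  | succ n ih => exact (congrArg (henon _) ih).trans (henon_ofRealPair _ _)

theorem tendsto_seqComp_henon_ofRealPair_iff {a : ℕ → ℝ} (ha : ∀ j, 0 ≤ a (j + 1))
    (hlim : Tendsto a atTop (𝓝 1)) {q : ℝ × ℝ} (hq : 0 ≤ q) :
    Tendsto (fun n => seqComp (fun j => henon (a j : ℂ)) n (ofRealPair q)) atTop (𝓝 0) ↔
      ∀ n, (realOrbit a q n).1 ≤ 1 := by
  simp only [seqComp_henon_ofRealPair]
  constructor
  · intro h n
    by_contra! hn
    have hre : Tendsto (fun m => (realOrbit a q m).1) atTop (𝓝 0) := by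
      simpa [Function.comp_def, re_ofRealPair_apply_zero] using
        ((show Continuous fun p : E2 => (p 0).re by fun_prop).tendsto 0).comp h
    have := ge_of_tendsto hre (eventually_atTop.2
      ⟨n, fun m hm => (one_lt_fst_realOrbit_of_le ha hq hn hm).le⟩)
    norm_num at this
  · intro hB
    simpa [Function.comp_def, ofRealPair_zero] using
      (continuous_ofRealPair.tendsto 0).comp (tendsto_realOrbit_of_bounded ha hlim hq hB)

/-- if `a_j ∈ (0,1)` are real with `a_j → 1` and
`f_j(z,w) = (z² + a_j w, a_j z)`, then the basin of attraction
`Ω* = {p : f_n ∘ ⋯ ∘ f_1(p) → 0}` is not open. -/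
theorem basin_not_open_of_slowly_attracting (a : ℕ → ℝ)
    (ha : ∀ j, 1 ≤ j → a j ∈ Set.Ioo (0 : ℝ) 1)
    (hlim : Tendsto a atTop (nhds 1)) :
    ¬ IsOpen {p : E2 |
        Tendsto (fun n => seqComp (fun j => henon (a j : ℂ)) n p) atTop (nhds 0)} := by
  intro hopen
  have ha' : ∀ j, 0 ≤ a (j + 1) := fun j => (ha (j + 1) (Nat.le_add_left 1 j)).1.le
  have hdiag : ∀ {t : ℝ}, 0 ≤ t → (0 : ℝ × ℝ) ≤ (t, t) := fun ht => ⟨ht, ht⟩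
  let basin := {t : ℝ | Tendsto (fun n => seqComp (fun j => henon (a j : ℂ)) n
    (ofRealPair (t, t))) atTop (𝓝 0)}
  let escape := ⋃ n, {t : ℝ | 1 < (realOrbit a (t, t) n).1}
  have hbasin : IsOpen basin :=
    hopen.preimage (continuous_ofRealPair.comp (continuous_id.prodMk continuous_id))
  have hescape : IsOpen escape := isOpen_iUnion fun n => isOpen_lt continuous_const
    (continuous_fst.comp ((continuous_realOrbit a n).comp (continuous_id.prodMk continuous_id)))
  have hmem : ∀ {t : ℝ}, 0 ≤ t → (t ∈ basin ↔ t ∉ escape) := fun ht => by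
    simp [basin, escape, tendsto_seqComp_henon_ofRealPair_iff ha' hlim (hdiag ht)]
  obtain ⟨t, ht, htb, hte⟩ := isPreconnected_Ici (a := (0 : ℝ)) basin escape hbasin hescape
    (fun t ht => or_iff_not_imp_right.2 (hmem ht).2)
    ⟨0, self_mem_Ici, (hmem le_rfl).2 (by simp [escape, Prod.mk_zero_zero, realOrbit_origin])⟩
    ⟨2, by norm_num, mem_iUnion.2 ⟨0, by norm_num [realOrbit]⟩⟩
  exact (hmem ht).1 htb hte

end
end

section
/- Let (a_j)_{j≥1} be real numbers in the open interval (0,1) and define f_j : ℂ² → ℂ² by f_j(z, w) = (z² + a_j w, a_j z). Then the escape set Ω_∞ = {p ∈ ℂ² : ‖f_n ∘ ⋯ ∘ f_1(p)‖ → ∞ as n → ∞} is an open subset of ℂ². -/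
open Filter Metric Set
open scoped ENNReal

noncomputable section

lemma henon_coord0 (c : ℂ) (p : E2) : henon c p 0 = p 0 ^ 2 + c * p 1 := rfl
lemma henon_coord1 (c : ℂ) (p : E2) : henon c p 1 = c * p 0 := rfl

lemma henon_continuous (c : ℂ) : Continuous (henon c) := by
  have hc : ∀ i : Fin 2, Continuous fun p : E2 => p i := fun i =>
    (EuclideanSpace.proj (𝕜 := ℂ) i).continuous
  refine (PiLp.continuous_toLp _ _).comp (continuous_pi ?_)
  intro i
  fin_cases i <;> dsimp
  · exact ((hc 0).pow 2).add (continuous_const.mul (hc 1))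
  · exact continuous_const.mul (hc 0)

lemma coord_le_norm (q : E2) (i : Fin 2) : ‖q i‖ ≤ ‖q‖ := by
  calc ‖q i‖ = Real.sqrt (‖q i‖ ^ 2) := (Real.sqrt_sq (norm_nonneg _)).symm
  _ ≤ ‖q‖ := by
      rw [EuclideanSpace.norm_eq]
      exact Real.sqrt_le_sqrt <|
        Finset.single_le_sum (f := fun j => ‖q j‖ ^ 2) (fun j _ => sq_nonneg _)
          (Finset.mem_univ i)

lemma norm_le_two_mul (q : E2) (M : ℝ) (h0 : ‖q 0‖ ≤ M) (h1 : ‖q 1‖ ≤ M) (hM : 0 ≤ M) :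
    ‖q‖ ≤ 2 * M := by
  calc ‖q‖ = Real.sqrt (‖q 0‖ ^ 2 + ‖q 1‖ ^ 2) := by
        rw [EuclideanSpace.norm_eq, Fin.sum_univ_two]
  _ ≤ Real.sqrt ((2 * M) ^ 2) :=
        Real.sqrt_le_sqrt (by nlinarith [norm_nonneg (q 0), norm_nonneg (q 1)])
  _ = 2 * M := Real.sqrt_sq (by linarith)

/-- The escape region. -/
def escU : Set E2 := {q | 3 < ‖q 0‖ ∧ ‖q 1‖ < ‖q 0‖}

lemma escU_isOpen : IsOpen escU := by
  have hc : ∀ i : Fin 2, Continuous fun p : E2 => ‖p i‖ := fun i =>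
    (EuclideanSpace.proj (𝕜 := ℂ) i).continuous.norm
  exact (isOpen_lt continuous_const (hc 0)).inter (isOpen_lt (hc 1) (hc 0))

lemma henon_step (c : ℂ) (hc : ‖c‖ ≤ 1) {q : E2} (hq : q ∈ escU) :
    henon c q ∈ escU ∧ 2 * ‖q 0‖ ≤ ‖henon c q 0‖ := by
  obtain ⟨h3, hw⟩ := hq
  have hz' : 2 * ‖q 0‖ ≤ ‖henon c q 0‖ := by
    rw [henon_coord0]
    have h1 : ‖q 0 ^ 2‖ ≤ ‖q 0 ^ 2 + c * q 1‖ + ‖c * q 1‖ := by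
      have := norm_add_le (q 0 ^ 2 + c * q 1) (-(c * q 1))
      simpa using this
    have h2 : ‖q 0 ^ 2‖ = ‖q 0‖ ^ 2 := norm_pow _ _
    have h4 : ‖c * q 1‖ ≤ ‖q 1‖ := by
      rw [norm_mul]
      nlinarith [norm_nonneg (q 1)]
    nlinarith
  have hw' : ‖henon c q 1‖ ≤ ‖q 0‖ := by
    rw [henon_coord1, norm_mul]
    nlinarith [norm_nonneg (q 0)]
  refine ⟨⟨by linarith, by linarith⟩, hz'⟩

/-- if `a_j ∈ (0,1)` are real and `f_j(z,w) = (z² + a_j w, a_j z)`, then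
the escape set `Ω_∞ = {p : ‖f_n ∘ ⋯ ∘ f_1(p)‖ → ∞}` is open. -/
theorem escape_set_isOpen (a : ℕ → ℝ)
    (ha : ∀ j, 1 ≤ j → a j ∈ Set.Ioo (0 : ℝ) 1) :
    IsOpen {p : E2 |
      Tendsto (fun n => ‖seqComp (fun j => henon (a j : ℂ)) n p‖) atTop atTop} := by
  set g : ℕ → E2 → E2 := fun j => henon (a j : ℂ) with hg
  have hnorm_a : ∀ j, 1 ≤ j → ‖((a j : ℝ) : ℂ)‖ ≤ 1 := by
    intro j hj
    rw [Complex.norm_real, Real.norm_eq_abs, abs_of_pos (ha j hj).1]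
    exact le_of_lt (ha j hj).2
  have hcont : ∀ n, Continuous (seqComp g n) := by
    intro n
    induction n with
    | zero => exact continuous_id
    | succ n ih => exact (henon_continuous _).comp ih
  have hsucc : ∀ n p, seqComp g (n + 1) p = henon ((a (n + 1) : ℝ) : ℂ) (seqComp g n p) :=
    fun n p => rfl
  -- the escape set equals the union of the preimages of escU
  have hset : {p : E2 | Tendsto (fun n => ‖seqComp g n p‖) atTop atTop} =
      ⋃ n, seqComp g n ⁻¹' escU := by
    ext p
    simp only [Set.mem_setOf_eq, Set.mem_iUnion, Set.mem_preimage]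
    constructor
    · intro htend
      by_contra hnot
      push_neg at hnot
      set M : ℝ := max 3 (max ‖p 0‖ ‖p 1‖) with hM
      have hM3 : (3 : ℝ) ≤ M := le_max_left _ _
      have hMp0 : ‖p 0‖ ≤ M := le_trans (le_max_left _ _) (le_max_right _ _)
      have hMp1 : ‖p 1‖ ≤ M := le_trans (le_max_right _ _) (le_max_right _ _)
      have hz : ∀ n, ‖(seqComp g n p) 0‖ ≤ M := by
        intro n
        induction n with
        | zero => exact hMp0
        | succ n ih =>
          by_cases h3 : ‖(seqComp g (n + 1) p) 0‖ ≤ 3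
          · linarith
          · push_neg at h3
            have hnU := hnot (n + 1)
            have hle : ‖(seqComp g (n + 1) p) 0‖ ≤ ‖(seqComp g (n + 1) p) 1‖ := by
              by_contra hlt
              push_neg at hlt
              exact hnU ⟨h3, hlt⟩
            have : ‖(seqComp g (n + 1) p) 1‖ ≤ ‖(seqComp g n p) 0‖ := by
              rw [hsucc, henon_coord1, norm_mul]
              nlinarith [norm_nonneg ((seqComp g n p) 0), hnorm_a (n + 1) (Nat.le_add_left 1 n),
                norm_nonneg (((a (n + 1) : ℝ) : ℂ))]
            linarith
      have hwb : ∀ n, ‖(seqComp g n p) 1‖ ≤ M := by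
        intro n
        cases n with
        | zero => exact hMp1
        | succ n =>
          rw [hsucc, henon_coord1, norm_mul]
          nlinarith [norm_nonneg ((seqComp g n p) 0), hnorm_a (n + 1) (Nat.le_add_left 1 n),
            norm_nonneg (((a (n + 1) : ℝ) : ℂ)), hz n]
      have hbd : ∀ n, ‖seqComp g n p‖ ≤ 2 * M :=
        fun n => norm_le_two_mul _ M (hz n) (hwb n) (by linarith)
      obtain ⟨n, hn⟩ := (htend.eventually (eventually_ge_atTop (2 * M + 1))).exists
      have := hbd n
      linarith
    · rintro ⟨N, hN⟩
      have key : ∀ k, seqComp g (N + k) p ∈ escU ∧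
          3 * 2 ^ k ≤ ‖(seqComp g (N + k) p) 0‖ := by
        intro k
        induction k with
        | zero => exact ⟨hN, by simpa using le_of_lt hN.1⟩
        | succ k ih =>
          obtain ⟨hmem, hge⟩ := ih
          have hstep := henon_step ((a (N + k + 1) : ℝ) : ℂ)
            (hnorm_a (N + k + 1) (Nat.le_add_left 1 (N + k))) hmem
          rw [show N + (k + 1) = (N + k) + 1 from rfl, hsucc]
          refine ⟨hstep.1, ?_⟩
          have := hstep.2
          have h2 : (3 : ℝ) * 2 ^ (k + 1) = 2 * (3 * 2 ^ k) := by ring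
          linarith
      rw [tendsto_atTop_atTop]
      intro b
      obtain ⟨k, hk⟩ := pow_unbounded_of_one_lt (y := (2 : ℝ)) b one_lt_two
      refine ⟨N + k, fun n hn => ?_⟩
      obtain ⟨m, rfl⟩ := Nat.exists_eq_add_of_le hn
      have h1 := (key (k + m)).2
      have h2 : ‖(seqComp g (N + (k + m)) p) 0‖ ≤ ‖seqComp g (N + (k + m)) p‖ :=
        coord_le_norm _ 0
      have h3 : (2 : ℝ) ^ k ≤ 2 ^ (k + m) :=
        pow_le_pow_right₀ one_le_two (Nat.le_add_right k m)
      have harr : N + k + m = N + (k + m) := by ring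
      rw [harr]
      nlinarith [pow_pos (zero_lt_two (α := ℝ)) k]
  rw [hset]
  exact isOpen_iUnion fun n => (escU_isOpen).preimage (hcont n)

end
end

section
/- Let (a_j)_{j≥1} be real numbers in the open interval (0,1) with a_j → 1, and define f_j : ℂ² → ℂ² by f_j(z, w) = (z² + a_j w, a_j z). Then for every point p = (x, y) ∈ ℂ² whose coordinates x and y are real and nonnegative, exactly one of the following holds: f_n ∘ ⋯ ∘ f_1(p) → 0 as n → ∞, or ‖f_n ∘ ⋯ ∘ f_1(p)‖ → ∞ as n → ∞. -/
/-!
On the quadrant every `f_j` preserves nonnegativity, so the orbit is described by the norms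
`x_n, y_n ≥ 0` of its coordinates, with `x_{n+1} = x_n² + a_{n+1} y_n` and `y_{n+1} = a_{n+1} x_n`.
If some `x_N > 1`, then `x_{n+1} ≥ x_n²` makes `x_n` grow geometrically. Otherwise `x_n ≤ 1`
throughout, and two steps give `x_{n+2} ≥ x_n⁴ + a_{n+2} a_{n+1} x_n`; as `a_j → 1`, at
`L = limsup x_n` this reads `L ≥ L⁴ + L`, so `L = 0`, and then `y_{n+1} = a_{n+1} x_n → 0` too.
-/

open Filter Metric Set
open scoped ENNReal

noncomputable section

open scoped Topology

theorem tendsto_atTop_of_sq_le_succ {x : ℕ → ℝ} (hsq : ∀ n, x n ^ 2 ≤ x (n + 1)) {N : ℕ}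
    (hN : 1 < x N) : Tendsto x atTop atTop := by
  have hge : ∀ k, x N ≤ x (N + k) := by
    intro k
    induction k with
    | zero => rfl
    | succ k ih =>
      calc x N ≤ x (N + k) := ih
        _ ≤ x (N + k) ^ 2 := by nlinarith
        _ ≤ x (N + (k + 1)) := hsq (N + k)
  have hgeom : ∀ k, x N * x (N + k) ≤ x (N + (k + 1)) := fun k =>
    calc x N * x (N + k) ≤ x (N + k) ^ 2 := by nlinarith [hge k]
      _ ≤ x (N + (k + 1)) := hsq (N + k)
  have hshift := tendsto_atTop_of_geom_le (v := fun k => x (N + k)) (by simp; linarith) hN hgeom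
  exact (tendsto_add_atTop_iff_nat N).1 (by simpa only [add_comm] using hshift)

theorem tendsto_zero_of_add_pow_le {u c : ℕ → ℝ} {m k : ℕ} (hu : ∀ n, 0 ≤ u n)
    (hbdd : BddAbove (range u)) (hc : Tendsto c atTop (𝓝 0))
    (h : ∀ n, u n + u n ^ k ≤ u (n + m) + c n) : Tendsto u atTop (𝓝 0) := by
  have hbdd' : IsBoundedUnder (· ≤ ·) atTop u := hbdd.isBoundedUnder_of_range
  have hcob : IsCoboundedUnder (· ≤ ·) atTop u := isCoboundedUnder_le_of_le atTop hu
  set L := limsup u atTop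
  suffices hL : L ≤ 0 from tendsto_order.2
    ⟨fun b hb => Eventually.of_forall fun n => hb.trans_le (hu n),
      fun b hb => eventually_lt_of_limsup_lt (hL.trans_lt hb) hbdd'⟩
  by_contra! hL
  -- For `n` with `u n > L - ε` and `u (n + m) < L + ε`, the gain `u n ^ k ≥ (L / 2) ^ k` is too big.
  set η := (L / 2) ^ k
  have hη : 0 < η := by positivity
  set ε := min (L / 2) (η / 3)
  have hε : 0 < ε := lt_min (by linarith) (by linarith)
  obtain ⟨n, hn_low, hn_up, hn_c⟩ :=
    ((frequently_lt_of_lt_limsup hcob (show L - ε < L by linarith)).and_eventually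
      (((tendsto_add_atTop_nat m).eventually
        (eventually_lt_of_limsup_lt (show L < L + ε by linarith) hbdd')).and
        (hc.eventually (gt_mem_nhds hε)))).exists
  have hpow : η ≤ u n ^ k :=
    pow_le_pow_left₀ (by positivity) (by linarith [min_le_left (L / 2) (η / 3)]) k
  linarith [h n, min_le_right (L / 2) (η / 3)]

theorem tendsto_zero_or_tendsto_atTop_of_henon_recurrence {a x y : ℕ → ℝ}
    (ha : ∀ j, 1 ≤ j → a j ∈ Icc (0 : ℝ) 1) (hlim : Tendsto a atTop (𝓝 1))
    (hx0 : ∀ n, 0 ≤ x n) (hy0 : ∀ n, 0 ≤ y n)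
    (hx : ∀ n, x (n + 1) = x n ^ 2 + a (n + 1) * y n) (hy : ∀ n, y (n + 1) = a (n + 1) * x n) :
    (Tendsto x atTop (𝓝 0) ∧ Tendsto y atTop (𝓝 0)) ∨ Tendsto x atTop atTop := by
  have hsq : ∀ n, x n ^ 2 ≤ x (n + 1) := fun n => by
    rw [hx n]
    exact le_add_of_nonneg_right (mul_nonneg (ha (n + 1) n.succ_pos).1 (hy0 n))
  by_cases hesc : ∃ N, 1 < x N
  · obtain ⟨N, hN⟩ := hesc
    exact Or.inr (tendsto_atTop_of_sq_le_succ hsq hN)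
  push Not at hesc
  have htwo : ∀ n, x n + x n ^ 4 ≤ x (n + 2) + (1 - a (n + 2) * a (n + 1)) := by
    intro n
    have hx2 : x (n + 2) = x (n + 1) ^ 2 + a (n + 2) * a (n + 1) * x n := by
      rw [hx (n + 1), hy n]; ring
    have hx4 : x n ^ 4 ≤ x (n + 1) ^ 2 := by
      simpa only [← pow_mul] using pow_le_pow_left₀ (sq_nonneg (x n)) (hsq n) 2
    obtain ⟨ha1, ha1'⟩ := ha (n + 1) (by omega)
    obtain ⟨ha2, ha2'⟩ := ha (n + 2) (by omega)
    have haa : a (n + 2) * a (n + 1) ≤ 1 := mul_le_one₀ ha2' ha1 ha1'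
    nlinarith [mul_le_mul_of_nonneg_left (hesc n) (sub_nonneg.2 haa)]
  have hc : Tendsto (fun n => 1 - a (n + 2) * a (n + 1)) atTop (𝓝 0) := by
    simpa using (tendsto_const_nhds (x := (1 : ℝ))).sub
      ((hlim.comp (tendsto_add_atTop_nat 2)).mul (hlim.comp (tendsto_add_atTop_nat 1)))
  have hx_lim : Tendsto x atTop (𝓝 0) :=
    tendsto_zero_of_add_pow_le hx0 ⟨1, forall_mem_range.2 hesc⟩ hc htwo
  refine Or.inl ⟨hx_lim, (tendsto_add_atTop_iff_nat 1).1 ?_⟩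
  simpa [hy] using (hlim.comp (tendsto_add_atTop_nat 1)).mul hx_lim

theorem seqComp_mapsTo {f : ℕ → E2 → E2} {s : Set E2} (hf : ∀ j, 1 ≤ j → MapsTo (f j) s s)
    (n : ℕ) : MapsTo (seqComp f n) s s := by
  induction n with
  | zero => exact mapsTo_id s
  | succ n ih => exact (hf (n + 1) n.succ_pos).comp ih

theorem PiLp.tendsto_zero_of_tendsto_norm_apply {ι α : Type*} [Fintype ι] {p : ℝ≥0∞}
    [Fact (1 ≤ p)] {β : ι → Type*} [∀ i, NormedAddCommGroup (β i)] {l : Filter α}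
    {q : α → PiLp p β} (h : ∀ i, Tendsto (fun n => ‖q n i‖) l (𝓝 0)) : Tendsto q l (𝓝 0) :=
  ((PiLp.continuous_toLp p β).tendsto 0).comp
    (tendsto_pi_nhds.2 fun i => tendsto_zero_iff_norm_tendsto_zero.2 (h i))

section Quadrant

open scoped ComplexOrder

theorem Complex.norm_add_of_nonneg {z w : ℂ} (hz : 0 ≤ z) (hw : 0 ≤ w) :
    ‖z + w‖ = ‖z‖ + ‖w‖ := by
  rw [← Complex.re_eq_norm.2 (add_nonneg hz hw), Complex.add_re, Complex.re_eq_norm.2 hz,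
    Complex.re_eq_norm.2 hw]

/-- Under `ComplexOrder`, `0 ≤ z` means that `z` is real and nonnegative. -/
def quadrant : Set E2 := {p | ∀ i, 0 ≤ p i}

theorem henon_mapsTo_quadrant {a : ℝ} (ha : 0 ≤ a) : MapsTo (henon a) quadrant quadrant := by
  intro p hp
  have ha' : (0 : ℂ) ≤ a := Complex.zero_le_real.2 ha
  refine Fin.forall_fin_two.2 ⟨?_, ?_⟩
  · exact add_nonneg (pow_nonneg (hp 0) 2) (mul_nonneg ha' (hp 1))
  · exact mul_nonneg ha' (hp 0)

theorem norm_henon_zero {a : ℝ} (ha : 0 ≤ a) {p : E2} (hp : p ∈ quadrant) :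
    ‖henon a p 0‖ = ‖p 0‖ ^ 2 + a * ‖p 1‖ := by
  have ha' : (0 : ℂ) ≤ a := Complex.zero_le_real.2 ha
  change ‖p 0 ^ 2 + a * p 1‖ = _
  rw [Complex.norm_add_of_nonneg (pow_nonneg (hp 0) 2) (mul_nonneg ha' (hp 1)), norm_pow,
    norm_mul, Complex.norm_real, Real.norm_of_nonneg ha]

theorem norm_henon_one {a : ℝ} (ha : 0 ≤ a) (p : E2) : ‖henon a p 1‖ = a * ‖p 0‖ := by
  change ‖(a : ℂ) * p 0‖ = _
  rw [norm_mul, Complex.norm_real, Real.norm_of_nonneg ha]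

end Quadrant

/-- if `a_j ∈ (0,1)` are real with `a_j → 1` and
`f_j(z,w) = (z² + a_j w, a_j z)`, then every point of the real quadrant
`ℝ²₊ ⊂ ℂ²` either converges to `0` or escapes to `∞` under the sequence,
and exactly one of the two alternatives holds. -/
theorem quadrant_dichotomy (a : ℕ → ℝ)
    (ha : ∀ j, 1 ≤ j → a j ∈ Set.Ioo (0 : ℝ) 1)
    (hlim : Tendsto a atTop (nhds 1))
    (p : E2)
    (hre0 : (p 0).im = 0) (hnn0 : 0 ≤ (p 0).re)
    (hre1 : (p 1).im = 0) (hnn1 : 0 ≤ (p 1).re) :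
    Xor' (Tendsto (fun n => seqComp (fun j => henon (a j : ℂ)) n p) atTop (nhds 0))
      (Tendsto (fun n => ‖seqComp (fun j => henon (a j : ℂ)) n p‖) atTop atTop) := by
  set q := fun n => seqComp (fun j => henon (a j : ℂ)) n p
  have ha' : ∀ j, 1 ≤ j → a j ∈ Icc (0 : ℝ) 1 := fun j hj => Ioo_subset_Icc_self (ha j hj)
  have hp : p ∈ quadrant := Fin.forall_fin_two.2
    ⟨Complex.nonneg_iff.2 ⟨hnn0, hre0.symm⟩, Complex.nonneg_iff.2 ⟨hnn1, hre1.symm⟩⟩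
  have hq : ∀ n, q n ∈ quadrant := fun n =>
    seqComp_mapsTo (fun j hj => henon_mapsTo_quadrant (ha' j hj).1) n hp
  refine (xor_iff_or_and_not_and _ _).2 ⟨?_, fun ⟨hzero, hinf⟩ =>
    not_tendsto_atTop_of_tendsto_nhds (tendsto_zero_iff_norm_tendsto_zero.1 hzero) hinf⟩
  rcases tendsto_zero_or_tendsto_atTop_of_henon_recurrence ha' hlim (fun n => norm_nonneg (q n 0))
    (fun n => norm_nonneg (q n 1)) (fun n => norm_henon_zero (ha' _ n.succ_pos).1 (hq n))
    (fun n => norm_henon_one (ha' _ n.succ_pos).1 (q n)) with ⟨h0, h1⟩ | hinf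
  · exact Or.inl (PiLp.tendsto_zero_of_tendsto_norm_apply (Fin.forall_fin_two.2 ⟨h0, h1⟩))
  · exact Or.inr (tendsto_atTop_mono (fun n => PiLp.norm_apply_le (q n) 0) hinf)

end
end
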